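/- Let μ satisfy Assumption 1 and let t > 1. Then: (i) F_μ extends analytically to a neighborhood of every point of ω_t(ℂ⁺ ∪ ℝ) that is not an atom of μ lying in supp(μ_ac); (ii) the Julia–Carathéodory derivative of F_μ exists at every atom E of μ and equals 1/μ({E}): for every sequence (z_n) ⊂ ℂ⁺ converging non-tangentially to E, F_μ(z_n)/(z_n − E) → 1/μ({E}); (iii) if E ∈ ℝ is such that F_μ is analytic at ω_t(E), then the non-tangential limit of (ω_t(z) − ω_t(E))/(z − E) as z → E is infinite if and only if F_μ'(ω_t(E)) = t/(t−1). -/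

import Mathlib

open MeasureTheory Topology Filter Set

noncomputable section

/-- The open upper half-plane ℂ⁺. -/
def UHP : Set ℂ := {z : ℂ | 0 < z.im}

/-- The closed upper half-plane ℂ⁺ ∪ ℝ. -/
def CUHP : Set ℂ := {z : ℂ | 0 ≤ z.im}

/-- Cauchy–Stieltjes transform `m_μ(z) = ∫ 1/(x−z) dμ(x)`. -/
def stT (μ : Measure ℝ) (z : ℂ) : ℂ := ∫ x, ((x : ℂ) - z)⁻¹ ∂μ

/-- Real-valued Cauchy–Stieltjes transform at real points (outside the support). -/
def stTR (μ : Measure ℝ) (E : ℝ) : ℝ := ∫ x, (x - E)⁻¹ ∂μ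

/-- Negative reciprocal Cauchy–Stieltjes transform `F_μ = −1/m_μ`. -/
def nrT (μ : Measure ℝ) (z : ℂ) : ℂ := -(stT μ z)⁻¹

/-- Support of a Borel measure on ℝ (the smallest closed set of full measure). -/
def msupp (μ : Measure ℝ) : Set ℝ := {x : ℝ | ∀ ε > 0, 0 < μ (Set.Ioo (x - ε) (x + ε))}

/-- Absolutely continuous part of μ with respect to Lebesgue measure. -/
def acPart (μ : Measure ℝ) : Measure ℝ := volume.withDensity (μ.rnDeriv volume)

/-- `I_μ(ω) = ∫ 1/|x−ω|² dμ(x)`. -/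
def Ifun (μ : Measure ℝ) (w : ℂ) : ℝ := ∫ x, (Complex.normSq ((x : ℂ) - w))⁻¹ ∂μ

/-- A sequence of the upper half-plane converging non-tangentially to `E ∈ ℝ`. -/
def NonTangentialSeq (z : ℕ → ℂ) (E : ℝ) : Prop :=
  (∀ n, z n ∈ UHP) ∧ Tendsto z atTop (𝓝 (E : ℂ)) ∧
    ∃ C : ℝ, ∀ n, |(z n).re - E| ≤ C * (z n).im

/-- The density `ρ_μ` of the a.c. part of `μ` vanishes at `x`
(via the Stieltjes inversion formula). -/
def densityVanishesAt (μ : Measure ℝ) (x : ℝ) : Prop :=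
  Tendsto (fun η : ℝ => (stT μ ((x : ℂ) + (η : ℂ) * Complex.I)).im) (𝓝[>] 0) (𝓝 0)

/-- The density `ρ_μ` of the a.c. part of `μ` diverges at `x`. -/
def densityDivergesAt (μ : Measure ℝ) (x : ℝ) : Prop :=
  Tendsto (fun η : ℝ => (stT μ ((x : ℂ) + (η : ℂ) * Complex.I)).im) (𝓝[>] 0) atTop

/-- Assumption 1. -/
structure Assumption1 (μ : Measure ℝ) (nac npp nppout : ℕ)
    (Em Ep : Fin nac → ℝ) (atom : Fin npp → ℝ) (ρ : ℝ → ℝ) : Prop where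
  prob : IsProbabilityMeasure μ
  compact : IsCompact (msupp μ)
  nac_pos : 1 ≤ nac
  npp_pos : 1 ≤ npp
  ρ_nonneg : ∀ x, 0 ≤ ρ x
  ac_density : acPart μ = volume.withDensity fun x => ENNReal.ofReal (ρ x)
  sing_atomic : μ.singularPart volume = ∑ j : Fin npp, μ {atom j} • Measure.dirac (atom j)
  atom_inj : Function.Injective atom
  atom_pos : ∀ j, 0 < μ {atom j}
  lt : ∀ j, Em j < Ep j
  ordered : ∀ i j : Fin nac, i < j → Ep i < Em j
  supp_ac : msupp (acPart μ) = ⋃ j, Set.Icc (Em j) (Ep j)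
  out_card : Nat.card {j : Fin npp // atom j ∉ msupp (acPart μ)} = nppout
  no_atom_endpoint : ∀ j i, atom j ≠ Em i ∧ atom j ≠ Ep i
  power_law : ∀ j, ∃ tm tp C : ℝ, -1 < tm ∧ tm < 1 ∧ -1 < tp ∧ tp < 1 ∧ 1 ≤ C ∧
    ∀ᵐ x ∂volume, x ∈ Set.Icc (Em j) (Ep j) →
      C⁻¹ < ρ x / ((x - Em j) ^ tm * (Ep j - x) ^ tp) ∧
      ρ x / ((x - Em j) ^ tm * (Ep j - x) ^ tp) < C

/-- The subordination function `ω_t` for the free convolution semi-group,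
together with its continuous extension to `ℂ⁺ ∪ ℝ`. -/
structure IsSubordT (μ : Measure ℝ) (t : ℝ) (ω : ℂ → ℂ) : Prop where
  diff : DifferentiableOn ℂ ω UHP
  maps : ∀ z ∈ UHP, ω z ∈ UHP
  imLe : ∀ z ∈ UHP, z.im ≤ (ω z).im
  limTop : Tendsto (fun η : ℝ => ω ((η : ℂ) * Complex.I) / ((η : ℂ) * Complex.I))
      atTop (𝓝 1)
  eqn : ∀ z ∈ UHP, (t : ℂ) * ω z - z = ((t : ℂ) - 1) * nrT μ (ω z)
  cont : ContinuousOn ω CUHP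

/-- `μt = μ^{⊞ t}`: the probability measure whose negative reciprocal Cauchy–Stieltjes
transform is `F_μ ∘ ω_t`, i.e. whose Cauchy–Stieltjes transform is `m_μ ∘ ω_t`. -/
def IsFreePow (μ : Measure ℝ) (ω : ℂ → ℂ) (μt : Measure ℝ) : Prop :=
  IsProbabilityMeasure μt ∧ ∀ z ∈ UHP, stT μt z = stT μ (ω z)

/-- Assumption 2 (for one of the two measures). -/
structure Assumption2 (μ : Measure ℝ) (n : ℕ) (Am Ap : Fin n → ℝ) (ρ : ℝ → ℝ) : Prop where
  prob : IsProbabilityMeasure μ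
  n_pos : 1 ≤ n
  centered : ∫ x, x ∂μ = 0
  ρ_nonneg : ∀ x, 0 ≤ ρ x
  ac : μ = volume.withDensity fun x => ENNReal.ofReal (ρ x)
  lt : ∀ j, Am j < Ap j
  ordered : ∀ i j : Fin n, i < j → Ap i < Am j
  supp_eq : msupp μ = ⋃ j, Set.Icc (Am j) (Ap j)
  power_law : ∀ j, ∃ sm sp C : ℝ, -1 < sm ∧ sm < 1 ∧ -1 < sp ∧ sp < 1 ∧ 1 ≤ C ∧
    ∀ᵐ x ∂volume, x ∈ Set.Icc (Am j) (Ap j) →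
      C⁻¹ < ρ x / ((x - Am j) ^ sm * (Ap j - x) ^ sp) ∧
      ρ x / ((x - Am j) ^ sm * (Ap j - x) ^ sp) < C

/-- The pair of subordination functions for the free additive convolution `μa ⊞ μb`. -/
structure IsSubordPair (μa μb : Measure ℝ) (ωa ωb : ℂ → ℂ) : Prop where
  diff_a : DifferentiableOn ℂ ωa UHP
  diff_b : DifferentiableOn ℂ ωb UHP
  maps_a : ∀ z ∈ UHP, ωa z ∈ UHP
  maps_b : ∀ z ∈ UHP, ωb z ∈ UHP
  imLe_a : ∀ z ∈ UHP, z.im ≤ (ωa z).im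
  imLe_b : ∀ z ∈ UHP, z.im ≤ (ωb z).im
  lim_a : Tendsto (fun η : ℝ => ωa ((η : ℂ) * Complex.I) / ((η : ℂ) * Complex.I))
      atTop (𝓝 1)
  lim_b : Tendsto (fun η : ℝ => ωb ((η : ℂ) * Complex.I) / ((η : ℂ) * Complex.I))
      atTop (𝓝 1)
  eqn_a : ∀ z ∈ UHP, ωa z + ωb z - z = nrT μa (ωb z)
  eqn_b : ∀ z ∈ UHP, ωa z + ωb z - z = nrT μb (ωa z)

/-- `μab = μa ⊞ μb`: the probability measure whose negative reciprocal Cauchy–Stieltjes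
transform is `F_{μa} ∘ ω_b`, i.e. whose Cauchy–Stieltjes transform is `m_{μa} ∘ ω_b`. -/
def IsFreeConv (μa μb : Measure ℝ) (ωb : ℂ → ℂ) (μab : Measure ℝ) : Prop :=
  IsProbabilityMeasure μab ∧ ∀ z ∈ UHP, stT μab z = stT μa (ωb z)

/-- `Ω` is the continuous extension of `ω` to `ℂ⁺ ∪ ℝ`, with values in the
Riemann sphere `ℂ ∪ {∞}`. -/
def ExtendsToRP (ω : ℂ → ℂ) (Ω : ℂ → OnePoint ℂ) : Prop :=
  ContinuousOn Ω CUHP ∧ ∀ z ∈ UHP, Ω z = (ω z : OnePoint ℂ)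

/-- `μhat` is the measure in the Nevanlinna representation
`F_μ(ω) − ω = −∫ x dμ + ∫ 1/(x−ω) dμ̂(x)`. -/
def IsNevanHat (μ μhat : Measure ℝ) : Prop :=
  IsFiniteMeasure μhat ∧ ∀ z ∈ UHP,
    nrT μ z - z = -((∫ x, x ∂μ : ℝ) : ℂ) + ∫ x, ((x : ℂ) - z)⁻¹ ∂μhat

end

/-!
(ii) is dominated convergence: non-tangentially `(z - E) / (x - z)` stays bounded and tends to
`-𝟙_{E}(x)`, so `(z - E) m_μ(z) → -μ{E}`.

(iii) With `c = t - (t - 1) F_μ'(ω(E))`, the subordination equation (which extends to `E`) gives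
`z - E = c (ω(z) - ω(E)) + o(ω(z) - ω(E))`, so the difference quotients of `ω` blow up exactly
when `c = 0`.

(i) Off the real line `F_μ = -1/m_μ` is analytic. Let `W = ω(E)` be real. An atom outside
`supp μ_ac` is isolated, and `F_μ(u) = (u - W) / (μ{W} + (W - u) m_ν(u))` with `m_ν` analytic at
`W`. A non-atom outside `supp μ_ac` has a neighbourhood of zero mass, so `m_μ` is analytic at `W`,
and `m_μ(W) ≠ 0` because `F_μ(ω(z)) = (t ω(z) - z) / (t - 1)` stays bounded. A non-atom `W` in
`supp μ_ac` is impossible: the power law (exponents `< 1`) makes `∫ |x - W|⁻² dμ` infinite, so by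
Fatou `I(ω(z)) = ∫ |x - ω(z)|⁻² dμ → ∞`; but the imaginary part of the subordination equation
gives `(t - 1) I < t |m_μ|²`, while, as `μ` has no atom at `W`, `|m_μ(u)|² ≤ ε I(u) + C` near `W`.
-/

open Asymptotics
open scoped ENNReal

section StieltjesTransform

variable {μ : Measure ℝ}

lemma im_le_norm_ofReal_sub (u : ℂ) (x : ℝ) : u.im ≤ ‖(x : ℂ) - u‖ :=
  (le_abs_self _).trans (by simpa using Complex.abs_im_le_norm ((x : ℂ) - u))

lemma ofReal_sub_ne_zero {u : ℂ} (hu : u ∈ UHP) (x : ℝ) : (x : ℂ) - u ≠ 0 :=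
  norm_pos_iff.mp ((show 0 < u.im from hu).trans_le (im_le_norm_ofReal_sub u x))

lemma norm_inv_le_inv {𝕜 : Type*} [NormedDivisionRing 𝕜] {a : 𝕜} {δ : ℝ} (hδ : 0 < δ) (h : δ ≤ ‖a‖) : ‖a⁻¹‖ ≤ δ⁻¹ := by
  rw [norm_inv]
  exact inv_anti₀ hδ h

lemma inv_normSq_le_inv_sq {a : ℂ} {δ : ℝ} (hδ : 0 < δ) (h : δ ≤ ‖a‖) :
    (Complex.normSq a)⁻¹ ≤ (δ ^ 2)⁻¹ := by
  rw [Complex.normSq_eq_norm_sq]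
  exact inv_anti₀ (by positivity) (pow_le_pow_left₀ hδ.le h 2)

lemma integrable_inv_ofReal_sub [IsFiniteMeasure μ] {u : ℂ} {δ : ℝ} (hδ : 0 < δ)
    (h : ∀ᵐ x : ℝ ∂μ, δ ≤ ‖(x : ℂ) - u‖) : Integrable (fun x : ℝ => ((x : ℂ) - u)⁻¹) μ :=
  (integrable_const δ⁻¹).mono' (by fun_prop) (h.mono fun _ hx => norm_inv_le_inv hδ hx)

lemma integrable_inv_ofReal_sub_of_mem_UHP [IsFiniteMeasure μ] {u : ℂ} (hu : u ∈ UHP) :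
    Integrable (fun x : ℝ => ((x : ℂ) - u)⁻¹) μ :=
  integrable_inv_ofReal_sub hu (ae_of_all _ (im_le_norm_ofReal_sub u))

lemma integrable_inv_normSq_ofReal_sub [IsFiniteMeasure μ] {u : ℂ} (hu : u ∈ UHP) :
    Integrable (fun x : ℝ => (Complex.normSq ((x : ℂ) - u))⁻¹) μ := by
  refine (integrable_const (u.im ^ 2)⁻¹).mono' (by fun_prop) (ae_of_all _ fun x => ?_)
  rw [Real.norm_of_nonneg (inv_nonneg.mpr (Complex.normSq_nonneg _))]
  exact inv_normSq_le_inv_sq hu (im_le_norm_ofReal_sub u x)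

lemma Ifun_nonneg (u : ℂ) : 0 ≤ Ifun μ u :=
  integral_nonneg fun _ => inv_nonneg.mpr (Complex.normSq_nonneg _)

lemma Ifun_pos [IsProbabilityMeasure μ] {u : ℂ} (hu : u ∈ UHP) : 0 < Ifun μ u := by
  have hsupp : Function.support (fun x : ℝ => (Complex.normSq ((x : ℂ) - u))⁻¹) = univ :=
    eq_univ_of_forall fun x => (inv_pos.mpr (Complex.normSq_pos.mpr (ofReal_sub_ne_zero hu x))).ne'
  rw [Ifun, integral_pos_iff_support_of_nonneg (fun _ => inv_nonneg.mpr (Complex.normSq_nonneg _))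
    (integrable_inv_normSq_ofReal_sub hu), hsupp]
  simp

lemma stT_im [IsFiniteMeasure μ] {u : ℂ} (hu : u ∈ UHP) : (stT μ u).im = u.im * Ifun μ u := by
  rw [stT, ← RCLike.im_to_complex, ← integral_im (integrable_inv_ofReal_sub_of_mem_UHP hu),
    Ifun, ← integral_const_mul]
  congr 1 with x
  simp [div_eq_mul_inv]

lemma stT_ne_zero [IsProbabilityMeasure μ] {u : ℂ} (hu : u ∈ UHP) : stT μ u ≠ 0 := by
  intro h
  have := stT_im (μ := μ) hu
  rw [h, Complex.zero_im] at this
  exact (mul_pos (show 0 < u.im from hu) (Ifun_pos hu)).ne' this.symm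

lemma nrT_im [IsFiniteMeasure μ] {u : ℂ} (hu : u ∈ UHP) :
    (nrT μ u).im = u.im * Ifun μ u / Complex.normSq (stT μ u) := by
  rw [nrT, Complex.neg_im, Complex.inv_im, stT_im hu]
  ring

end StieltjesTransform

section Analyticity

variable {μ : Measure ℝ}

lemma ae_forall_mem_ball_le_norm_ofReal_sub {u₀ : ℂ} {δ r : ℝ}
    (h : ∀ᵐ x : ℝ ∂μ, δ ≤ ‖(x : ℂ) - u₀‖) :
    ∀ᵐ x : ℝ ∂μ, ∀ u ∈ Metric.ball u₀ r, δ - r ≤ ‖(x : ℂ) - u‖ := by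
  filter_upwards [h] with x hx u hu
  rw [Metric.mem_ball, dist_eq_norm] at hu
  linarith [norm_sub_le_norm_sub_add_norm_sub (x : ℂ) u u₀]

lemma stT_hasDerivAt [IsFiniteMeasure μ] {u₀ : ℂ} {δ : ℝ} (hδ : 0 < δ)
    (h : ∀ᵐ x : ℝ ∂μ, δ ≤ ‖(x : ℂ) - u₀‖) :
    HasDerivAt (stT μ) (∫ x, (((x : ℂ) - u₀) ^ 2)⁻¹ ∂μ) u₀ := by
  have hball : ∀ᵐ x : ℝ ∂μ, ∀ u ∈ Metric.ball u₀ (δ / 2), δ / 2 ≤ ‖(x : ℂ) - u‖ := by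
    filter_upwards [ae_forall_mem_ball_le_norm_ofReal_sub (r := δ / 2) h] with x hx u hu
    linarith [hx u hu]
  refine (hasDerivAt_integral_of_dominated_loc_of_deriv_le (F := fun u (x : ℝ) => ((x : ℂ) - u)⁻¹)
    (F' := fun u (x : ℝ) => (((x : ℂ) - u) ^ 2)⁻¹) (Metric.ball_mem_nhds u₀ (half_pos hδ))
    (Eventually.of_forall fun _ => by fun_prop) (integrable_inv_ofReal_sub hδ h) (by fun_prop)
    (bound := fun _ => ((δ / 2) ^ 2)⁻¹) ?_ (integrable_const _) ?_).2
  · filter_upwards [hball] with x hx u hu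
    rw [← inv_pow, ← inv_pow, norm_pow]
    exact pow_le_pow_left₀ (norm_nonneg _) (norm_inv_le_inv (half_pos hδ) (hx u hu)) 2
  · filter_upwards [hball] with x hx u hu
    have hne : (x : ℂ) - u ≠ 0 := norm_pos_iff.mp ((half_pos hδ).trans_le (hx u hu))
    simpa using ((hasDerivAt_id u).const_sub (x : ℂ)).fun_inv hne

lemma stT_analyticAt [IsFiniteMeasure μ] {u₀ : ℂ} {δ : ℝ} (hδ : 0 < δ)
    (h : ∀ᵐ x : ℝ ∂μ, δ ≤ ‖(x : ℂ) - u₀‖) : AnalyticAt ℂ (stT μ) u₀ := by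
  refine DifferentiableOn.analyticAt (s := Metric.ball u₀ (δ / 2)) (fun u hu => ?_)
    (Metric.ball_mem_nhds u₀ (half_pos hδ))
  have hδu := (ae_forall_mem_ball_le_norm_ofReal_sub h).mono fun _ hx => hx u hu
  exact (stT_hasDerivAt (by linarith) hδu).differentiableAt.differentiableWithinAt

lemma nrT_analyticAt_of_mem_UHP [IsProbabilityMeasure μ] {u : ℂ} (hu : u ∈ UHP) :
    AnalyticAt ℂ (nrT μ) u :=
  ((stT_analyticAt hu (ae_of_all _ (im_le_norm_ofReal_sub u))).inv (stT_ne_zero hu)).neg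

lemma stT_analyticAt_of_measure_ball_eq_zero [IsFiniteMeasure μ] {W ε : ℝ} (hε : 0 < ε)
    (h : μ (Metric.ball W ε) = 0) : AnalyticAt ℂ (stT μ) W := by
  refine stT_analyticAt hε ?_
  filter_upwards [measure_eq_zero_iff_ae_notMem.mp h] with x hx
  rwa [Metric.mem_ball, Real.dist_eq, not_lt, ← Real.norm_eq_abs, ← Complex.norm_real,
    Complex.ofReal_sub] at hx

end Analyticity

lemma exists_analyticAt_eqOn_of_analyticAt {F g : ℂ → ℂ} {w : ℂ} (hg : AnalyticAt ℂ g w)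
    (hgF : EqOn g F UHP) :
    ∃ r : ℝ, 0 < r ∧ ∃ g : ℂ → ℂ,
      (∀ u ∈ Metric.ball w r, AnalyticAt ℂ g u) ∧ EqOn g F (Metric.ball w r ∩ UHP) := by
  obtain ⟨r, hr, hball⟩ := Metric.eventually_nhds_iff_ball.mp hg.eventually_analyticAt
  exact ⟨r, hr, g, hball, hgF.mono inter_subset_right⟩

section JuliaCaratheodory

variable {μ : Measure ℝ} {zs : ℕ → ℂ} {E : ℝ}

lemma NonTangentialSeq.exists_norm_sub_le (h : NonTangentialSeq zs E) :
    ∃ C, ∀ n, ‖zs n - E‖ ≤ C * (zs n).im := by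
  obtain ⟨hUHP, -, C, hC⟩ := h
  refine ⟨C + 1, fun n => ?_⟩
  have hre : |(zs n - E).re| ≤ C * (zs n).im := by simpa using hC n
  have him : |(zs n - E).im| = (zs n).im := by simpa using (hUHP n).le
  linarith [Complex.norm_le_abs_re_add_abs_im (zs n - E)]

lemma NonTangentialSeq.tendsto_sub_mul_stT [IsFiniteMeasure μ] (h : NonTangentialSeq zs E) :
    Tendsto (fun n => (zs n - E) * stT μ (zs n)) atTop (𝓝 (-(μ.real {E} : ℂ))) := by
  obtain ⟨C, hC⟩ := h.exists_norm_sub_le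
  have hlim : ∫ x, ({E} : Set ℝ).indicator (fun _ => (-1 : ℂ)) x ∂μ = -(μ.real {E} : ℂ) := by
    rw [integral_indicator_const _ (measurableSet_singleton E)]
    simp
  rw [← hlim]
  refine (tendsto_integral_of_dominated_convergence (F := fun n (x : ℝ) =>
    (zs n - E) * ((x : ℂ) - zs n)⁻¹) (fun _ => C) (fun n => by fun_prop)
    (integrable_const C) (fun n => ae_of_all _ fun x => ?_) (ae_of_all _ fun x => ?_)).congr
    fun n => by rw [stT, integral_const_mul]
  · have hUHP : zs n ∈ UHP := h.1 n
    rw [norm_mul]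
    calc ‖zs n - E‖ * ‖((x : ℂ) - zs n)⁻¹‖ ≤ C * (zs n).im * ((zs n).im)⁻¹ :=
          mul_le_mul (hC n) (norm_inv_le_inv hUHP (im_le_norm_ofReal_sub _ x)) (norm_nonneg _)
            ((norm_nonneg _).trans (hC n))
      _ = C := by field_simp [(show 0 < (zs n).im from hUHP).ne']
  · rcases eq_or_ne x E with rfl | hx
    · refine tendsto_const_nhds.congr fun n => ?_
      rw [← neg_sub, neg_mul, mul_inv_cancel₀ (ofReal_sub_ne_zero (h.1 n) x)]
      simp
    · have hxE : (x : ℂ) - E ≠ 0 := sub_ne_zero.mpr (by exact_mod_cast hx)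
      have := (h.2.1.sub_const (E : ℂ)).mul
        (((tendsto_const_nhds (x := (x : ℂ))).sub h.2.1).inv₀ hxE)
      simpa [hx] using this

lemma NonTangentialSeq.tendsto_nrT_div_sub [IsFiniteMeasure μ] (h : NonTangentialSeq zs E)
    (hE : μ {E} ≠ 0) :
    Tendsto (fun n => nrT μ (zs n) / (zs n - E)) atTop (𝓝 ((((μ {E}).toReal)⁻¹ : ℝ) : ℂ)) := by
  have hpos : (μ.real {E} : ℂ) ≠ 0 := by
    exact_mod_cast (ENNReal.toReal_pos hE (measure_ne_top μ _)).ne'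
  convert (h.tendsto_sub_mul_stT (μ := μ)).inv₀ (neg_ne_zero.mpr hpos) |>.neg using 1
  · ext n
    rw [nrT, div_eq_mul_inv, mul_inv]
    ring
  · simp [Measure.real]

end JuliaCaratheodory

lemma tendsto_norm_div_atTop_of_isLittleO {α 𝕜 : Type*} [NormedField 𝕜] {l : Filter α}
    {f g : α → 𝕜}
    (h : f =o[l] g) (hf : ∀ᶠ x in l, f x ≠ 0) : Tendsto (fun x => ‖g x / f x‖) l atTop := by
  refine tendsto_atTop.mpr fun b => ?_
  have hb : 0 < |b| + 1 := by positivity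
  filter_upwards [h.def (inv_pos.mpr hb), hf] with x hx hfx
  rw [norm_div, le_div_iff₀ (norm_pos_iff.mpr hfx)]
  have := mul_le_mul_of_nonneg_left hx hb.le
  rw [← mul_assoc, mul_inv_cancel₀ hb.ne', one_mul] at this
  nlinarith [le_abs_self b, norm_nonneg (f x)]

lemma closure_UHP : closure UHP = CUHP := Complex.closure_setOfPred_lt_im 0

lemma nhdsWithin_UHP_neBot {z : ℂ} (hz : z ∈ CUHP) : (𝓝[UHP] z).NeBot :=
  mem_closure_iff_nhdsWithin_neBot.mp (closure_UHP ▸ hz)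

lemma ofReal_mem_CUHP (E : ℝ) : (E : ℂ) ∈ CUHP := by simp [CUHP]

lemma NonTangentialSeq.tendsto_nhdsWithin {zs : ℕ → ℂ} {E : ℝ} (h : NonTangentialSeq zs E) :
    Tendsto zs atTop (𝓝[UHP] (E : ℂ)) :=
  tendsto_nhdsWithin_iff.mpr ⟨h.2.1, Eventually.of_forall h.1⟩

noncomputable def verticalSeq (E : ℝ) (n : ℕ) : ℂ := E + ((((n : ℝ) + 1)⁻¹ : ℝ) : ℂ) * Complex.I

lemma nonTangentialSeq_verticalSeq (E : ℝ) : NonTangentialSeq (verticalSeq E) E := by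
  refine ⟨fun n => ?_, ?_, 0, fun n => by simp [verticalSeq]⟩
  · change 0 < (verticalSeq E n).im
    simp only [verticalSeq, Complex.add_im, Complex.ofReal_im, Complex.mul_im, Complex.ofReal_re,
      Complex.I_im, Complex.I_re]
    positivity
  · have h0 : Tendsto (fun n : ℕ => ((n : ℝ) + 1)⁻¹) atTop (𝓝 0) := by
      simpa [one_div] using tendsto_one_div_add_atTop_nhds_zero_nat (𝕜 := ℝ)
    have := (((Complex.continuous_ofReal.tendsto 0).comp h0).mul_const Complex.I).const_add (E : ℂ)
    rwa [Complex.ofReal_zero, zero_mul, add_zero] at this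

section Subordination

variable {μ : Measure ℝ} {t : ℝ} {ω : ℂ → ℂ}

lemma IsSubordT.tendsto_nhdsWithin (hω : IsSubordT μ t ω) {z : ℂ} (hz : z ∈ CUHP) :
    Tendsto ω (𝓝[UHP] z) (𝓝 (ω z)) :=
  ((hω.cont z hz).mono fun u hu => show 0 ≤ u.im from le_of_lt hu).tendsto

lemma IsSubordT.im_nonneg (hω : IsSubordT μ t ω) {z : ℂ} (hz : z ∈ CUHP) : 0 ≤ (ω z).im :=
  have := nhdsWithin_UHP_neBot hz
  ge_of_tendsto ((Complex.continuous_im.tendsto _).comp (hω.tendsto_nhdsWithin hz))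
    (eventually_nhdsWithin_of_forall fun u hu => (hω.maps u hu).le)

lemma IsSubordT.eqn_of_continuousAt (hω : IsSubordT μ t ω) {z : ℂ} (hz : z ∈ CUHP) {g : ℂ → ℂ}
    (hg : ContinuousAt g (ω z)) (hgF : EqOn g (nrT μ) UHP) :
    (t : ℂ) * ω z - z = ((t : ℂ) - 1) * g (ω z) := by
  have := nhdsWithin_UHP_neBot hz
  have hlim := hω.tendsto_nhdsWithin hz
  refine tendsto_nhds_unique (((hlim.const_mul _).sub
    (tendsto_id.mono_left nhdsWithin_le_nhds)).congr' ?_) ((hg.tendsto.comp hlim).const_mul _)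
  filter_upwards [self_mem_nhdsWithin] with u hu
  simp only [Function.comp_apply, id]
  rw [hω.eqn u hu, hgF (hω.maps u hu)]

lemma IsSubordT.isLittleO_sub (hω : IsSubordT μ t ω) (E : ℝ) {g : ℂ → ℂ}
    (hg : DifferentiableAt ℂ g (ω E)) (hgF : EqOn g (nrT μ) UHP) :
    (fun z => z - E - (t - (t - 1) * deriv g (ω E)) * (ω z - ω E)) =o[𝓝[UHP] (E : ℂ)]
      fun z => ω z - ω E := by
  have hlim := hω.tendsto_nhdsWithin (ofReal_mem_CUHP E)
  have hE := hω.eqn_of_continuousAt (ofReal_mem_CUHP E) hg.continuousAt hgF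
  refine ((hasDerivAt_iff_isLittleO.mp hg.hasDerivAt).comp_tendsto hlim
    |>.const_mul_left (1 - (t : ℂ))).congr' ?_ EventuallyEq.rfl
  filter_upwards [self_mem_nhdsWithin] with z hz
  have hz' := hω.eqn z hz
  rw [← hgF (hω.maps z hz)] at hz'
  simp only [Function.comp_apply, smul_eq_mul]
  linear_combination hz' - hE

lemma IsSubordT.tendsto_norm_div_atTop_iff (hω : IsSubordT μ t ω) (ht : t ≠ 1) (E : ℝ)
    {g : ℂ → ℂ} (hg : DifferentiableAt ℂ g (ω E)) (hgF : EqOn g (nrT μ) UHP) :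
    (∀ zs : ℕ → ℂ, NonTangentialSeq zs E →
        Tendsto (fun n => ‖(ω (zs n) - ω E) / (zs n - E)‖) atTop atTop) ↔
      deriv g (ω E) = ((t / (t - 1) : ℝ) : ℂ) := by
  have ht' : (t : ℂ) - 1 ≠ 0 := sub_ne_zero.mpr (by exact_mod_cast ht)
  have hc : t - (t - 1) * deriv g (ω E) = 0 ↔ deriv g (ω E) = ((t / (t - 1) : ℝ) : ℂ) := by
    push_cast
    rw [eq_div_iff ht', sub_eq_zero, eq_comm, mul_comm]
  have ho := hω.isLittleO_sub E hg hgF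
  rw [← hc]
  set c := (t : ℂ) - (t - 1) * deriv g (ω E)
  constructor
  · intro H
    by_contra hc0
    have hO : (fun z => ω z - ω E) =O[𝓝[UHP] (E : ℂ)] fun z => z - E := by
      have := ((isLittleO_const_mul_right_iff hc0).mpr ho).right_isBigO_add
      simp only [sub_add_cancel] at this
      exact (isBigO_const_mul_left_iff hc0).mp this
    obtain ⟨C, hC⟩ := (hO.comp_tendsto (nonTangentialSeq_verticalSeq E).tendsto_nhdsWithin).bound
    obtain ⟨n, hn, hnC⟩ := ((H _ (nonTangentialSeq_verticalSeq E)).eventually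
      (eventually_gt_atTop C)).and hC |>.exists
    rw [norm_div, lt_div_iff₀ (norm_pos_iff.mpr
      (sub_ne_zero.mpr (ne_of_apply_ne Complex.im ?_)))] at hn
    · exact hn.not_ge hnC
    · exact ((nonTangentialSeq_verticalSeq E).1 n).ne'
  · intro hc0 zs hzs
    rw [hc0] at ho
    simp only [zero_mul, sub_zero] at ho
    refine tendsto_norm_div_atTop_of_isLittleO (ho.comp_tendsto hzs.tendsto_nhdsWithin)
      (Eventually.of_forall fun n => sub_ne_zero.mpr (ne_of_apply_ne Complex.im ?_))
    exact (hzs.1 n).ne'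

end Subordination

section Divergence

variable {μ : Measure ℝ} {ρ : ℝ → ℝ}

lemma mul_le_rpow_of_le {y L e : ℝ} (hy : 0 < y) (hyL : y ≤ L) (he : e ≤ 1) :
    L ^ (e - 1) * y ≤ y ^ e := by
  calc L ^ (e - 1) * y ≤ y ^ (e - 1) * y :=
        mul_le_mul_of_nonneg_right (Real.rpow_le_rpow_of_nonpos hy hyL (by linarith)) hy.le
    _ = y ^ e := by rw [Real.rpow_sub_one hy.ne', div_mul_cancel₀ _ hy.ne']

lemma ae_mul_le_of_power_law {a b tm tp c : ℝ} (htm : tm ≤ 1) (htp : tp ≤ 1)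
    (hc : 0 ≤ c) (hρ0 : ∀ x, 0 ≤ ρ x)
    (hρ : ∀ᵐ x, x ∈ Icc a b → c < ρ x / ((x - a) ^ tm * (b - x) ^ tp)) :
    ∀ᵐ x, x ∈ Icc a b →
      c * (b - a) ^ (tm - 1) * (b - a) ^ (tp - 1) * ((x - a) * (b - x)) ≤ ρ x := by
  filter_upwards [hρ] with x hx hxI
  rcases eq_or_lt_of_le hxI.1 with rfl | hxa
  · simpa using hρ0 _
  rcases eq_or_lt_of_le hxI.2 with rfl | hxb
  · simpa using hρ0 _
  have hxa' : 0 < x - a := sub_pos.mpr hxa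
  have hxb' : 0 < b - x := sub_pos.mpr hxb
  have hpow : 0 < (x - a) ^ tm * (b - x) ^ tp := by positivity
  have hL : 0 < b - a := by linarith
  have h1 := mul_le_rpow_of_le (L := b - a) hxa' (by linarith) htm
  have h2 := mul_le_rpow_of_le (L := b - a) hxb' (by linarith) htp
  calc c * (b - a) ^ (tm - 1) * (b - a) ^ (tp - 1) * ((x - a) * (b - x))
      = c * (((b - a) ^ (tm - 1) * (x - a)) * ((b - a) ^ (tp - 1) * (b - x))) := by ring
    _ ≤ c * ((x - a) ^ tm * (b - x) ^ tp) := by gcongr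
    _ ≤ ρ x := by nlinarith [(lt_div_iff₀ hpow).mp (hx hxI)]

lemma setLIntegral_le_lintegral_of_le_density
    (hac : acPart μ = volume.withDensity fun x => ENNReal.ofReal (ρ x))
    {S : Set ℝ} (hS : MeasurableSet S) {φ : ℝ → ℝ} (hφ : Measurable φ)
    (hφρ : ∀ᵐ x, x ∈ S → φ x ≤ ρ x) {f : ℝ → ℝ≥0∞} (hf : Measurable f) :
    ∫⁻ x in S, ENNReal.ofReal (φ x) * f x ≤ ∫⁻ x, f x ∂μ := by
  have hle : (volume.restrict S).withDensity (fun x => ENNReal.ofReal (φ x)) ≤ acPart μ := by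
    rw [← withDensity_indicator hS, hac]
    refine withDensity_mono ?_
    filter_upwards [hφρ] with x hx
    by_cases hxS : x ∈ S
    · rw [indicator_of_mem hxS]
      exact ENNReal.ofReal_le_ofReal (hx hxS)
    · rw [indicator_of_notMem hxS]
      exact zero_le
  calc ∫⁻ x in S, ENNReal.ofReal (φ x) * f x
      = ∫⁻ x, f x ∂(volume.restrict S).withDensity fun x => ENNReal.ofReal (φ x) :=
        (lintegral_withDensity_eq_lintegral_mul _ (by fun_prop) hf).symm
    _ ≤ ∫⁻ x, f x ∂acPart μ := lintegral_mono' hle le_rfl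
    _ ≤ ∫⁻ x, f x ∂μ := lintegral_mono' (Measure.withDensity_rnDeriv_le μ volume) le_rfl

lemma setLIntegral_inv_abs_sub_eq_top {W c : ℝ} (hc : W ≠ c) :
    ∫⁻ x in uIoc W c, ENNReal.ofReal |x - W|⁻¹ = ⊤ := by
  by_contra h
  have : IntervalIntegrable (fun x => (x - W)⁻¹) volume W c := by
    refine intervalIntegrable_iff.mpr ⟨by fun_prop, ?_⟩
    simpa [HasFiniteIntegral, Real.enorm_eq_ofReal_abs] using lt_top_iff_ne_top.mpr h
  simp [hc] at this

lemma exists_uIoc_subset_mul_le {a b W : ℝ} (hab : a < b) (hW : W ∈ Icc a b) :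
    ∃ c ≠ W, ∃ k > 0, uIoc W c ⊆ Icc a b ∧ ∀ x ∈ uIoc W c, k * |x - W| ≤ (x - a) * (b - x) := by
  rcases eq_or_lt_of_le hW.2 with rfl | hWb
  · refine ⟨(a + W) / 2, by linarith, (W - a) / 2, by linarith, fun x hx => ?_, fun x hx => ?_⟩
      <;> rw [uIoc_of_ge (by linarith)] at hx
    · exact ⟨by linarith [hx.1], hx.2⟩
    · rw [abs_of_nonpos (by linarith [hx.2])]
      nlinarith [hx.1, hx.2]
  · refine ⟨(W + b) / 2, by linarith, (b - W) / 2, by linarith, fun x hx => ?_, fun x hx => ?_⟩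
      <;> rw [uIoc_of_le (by linarith)] at hx
    · exact ⟨by linarith [hW.1, hx.1], by linarith [hx.2]⟩
    · rw [abs_of_pos (by linarith [hx.1])]
      nlinarith [hx.1, hx.2, hW.1]

lemma lintegral_inv_normSq_sub_eq_top_of_le_density
    (hac : acPart μ = volume.withDensity fun x => ENNReal.ofReal (ρ x))
    {a b c W : ℝ} (hab : a < b) (hW : W ∈ Icc a b) (hc : 0 < c)
    (hρ : ∀ᵐ x, x ∈ Icc a b → c * ((x - a) * (b - x)) ≤ ρ x) :
    ∫⁻ x, ENNReal.ofReal (Complex.normSq ((x : ℂ) - W))⁻¹ ∂μ = ⊤ := by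
  obtain ⟨c', hc', k, hk, hsub, hle⟩ := exists_uIoc_subset_mul_le hab hW
  refine top_unique (le_trans ?_ (setLIntegral_le_lintegral_of_le_density hac measurableSet_uIoc
    (φ := fun x => c * ((x - a) * (b - x))) (by fun_prop)
    (hρ.mono fun x hx hxS => hx (hsub hxS)) (by fun_prop)))
  calc (⊤ : ℝ≥0∞) = ∫⁻ x in uIoc W c', ENNReal.ofReal (c * k) * ENNReal.ofReal |x - W|⁻¹ := by
        rw [lintegral_const_mul _ (by fun_prop), setLIntegral_inv_abs_sub_eq_top hc'.symm,
          ENNReal.mul_top (by simp [hc, hk])]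
    _ ≤ _ := by
      refine setLIntegral_mono (by fun_prop) fun x hx => ?_
      have hP : 0 ≤ (x - a) * (b - x) := (mul_nonneg hk.le (abs_nonneg _)).trans (hle x hx)
      rw [← ENNReal.ofReal_mul (by positivity), ← ENNReal.ofReal_mul (by positivity)]
      refine ENNReal.ofReal_le_ofReal ?_
      rw [← Complex.ofReal_sub, Complex.normSq_ofReal, ← abs_mul_abs_self (x - W)]
      calc c * k * |x - W|⁻¹ = c * (k * |x - W|) * (|x - W| * |x - W|)⁻¹ := by
            rcases eq_or_ne |x - W| 0 with h | h
            · simp [h]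
            · field_simp
        _ ≤ c * ((x - a) * (b - x)) * (|x - W| * |x - W|)⁻¹ :=
            mul_le_mul_of_nonneg_right (mul_le_mul_of_nonneg_left (hle x hx) hc.le) (by positivity)

end Divergence

lemma setIntegral_le_sqrt_measureReal_mul_integral_sq {α : Type*} [MeasurableSpace α]
    {ν : Measure α} [IsFiniteMeasure ν] {f : α → ℝ} (hf0 : ∀ x, 0 ≤ f x) (hf : MemLp f 2 ν)
    (s : Set α) : ∫ x in s, f x ∂ν ≤ √(ν.real s * ∫ x, f x ^ 2 ∂ν) := by
  have hHolder := integral_mul_le_Lp_mul_Lq_of_nonneg (μ := ν.restrict s)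
    Real.HolderConjugate.two_two (ae_of_all _ hf0) (ae_of_all _ fun _ => zero_le_one)
    (by simpa using hf.restrict s) (by simpa using memLp_const (μ := ν.restrict s) (1 : ℝ))
  have hsq : ∫ x in s, f x ^ 2 ∂ν ≤ ∫ x, f x ^ 2 ∂ν :=
    setIntegral_le_integral (hf.integrable_sq) (ae_of_all _ fun x => sq_nonneg (f x))
  simp only [mul_one, Real.rpow_two, one_pow, integral_const, smul_eq_mul,
    measureReal_restrict_apply_univ] at hHolder
  rw [Real.sqrt_mul' _ (integral_nonneg fun x => sq_nonneg (f x)), mul_comm]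
  refine hHolder.trans ?_
  rw [← Real.sqrt_eq_rpow, ← Real.sqrt_eq_rpow]
  gcongr

section NonAtomEstimate

variable {μ : Measure ℝ}

lemma Assumption1.lintegral_inv_normSq_sub_eq_top {nac npp nppout : ℕ} {Em Ep : Fin nac → ℝ}
    {atom : Fin npp → ℝ} {ρ : ℝ → ℝ} (hμ : Assumption1 μ nac npp nppout Em Ep atom ρ) {W : ℝ}
    (hW : W ∈ msupp (acPart μ)) :
    ∫⁻ x, ENNReal.ofReal (Complex.normSq ((x : ℂ) - W))⁻¹ ∂μ = ⊤ := by
  obtain ⟨j, hj⟩ := mem_iUnion.mp (hμ.supp_ac ▸ hW)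
  obtain ⟨tm, tp, C, -, htm, -, htp, hC, hρ⟩ := hμ.power_law j
  have hab := hμ.lt j
  have hL : 0 < Ep j - Em j := sub_pos.mpr hab
  have hC0 : 0 < C := by linarith
  refine lintegral_inv_normSq_sub_eq_top_of_le_density hμ.ac_density hab hj
    (c := C⁻¹ * (Ep j - Em j) ^ (tm - 1) * (Ep j - Em j) ^ (tp - 1)) (by positivity) ?_
  exact ae_mul_le_of_power_law htm.le htp.le (inv_nonneg.mpr hC0.le) hμ.ρ_nonneg
    (hρ.mono fun x hx hxI => (hx hxI).1)

lemma tendsto_Ifun_atTop [IsFiniteMeasure μ] {u : ℕ → ℂ} {W : ℝ}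
    (hu : Tendsto u atTop (𝓝 W)) (huUHP : ∀ n, u n ∈ UHP) (hW : μ {W} = 0)
    (htop : ∫⁻ x, ENNReal.ofReal (Complex.normSq ((x : ℂ) - W))⁻¹ ∂μ = ⊤) :
    Tendsto (fun n => Ifun μ (u n)) atTop atTop := by
  set G : ℕ → ℝ≥0∞ := fun n => ∫⁻ x, ENNReal.ofReal (Complex.normSq ((x : ℂ) - u n))⁻¹ ∂μ
  have hpt : ∀ᵐ x : ℝ ∂μ, ENNReal.ofReal (Complex.normSq ((x : ℂ) - W))⁻¹ =
      liminf (fun n => ENNReal.ofReal (Complex.normSq ((x : ℂ) - u n))⁻¹) atTop := by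
    filter_upwards [measure_eq_zero_iff_ae_notMem.mp hW] with x hx
    have hx0 : Complex.normSq ((x : ℂ) - W) ≠ 0 :=
      (Complex.normSq_pos.mpr (sub_ne_zero.mpr (by exact_mod_cast hx))).ne'
    refine (Tendsto.liminf_eq ?_).symm
    exact (ENNReal.continuous_ofReal.tendsto _).comp
      (((Complex.continuous_normSq.tendsto _).comp (tendsto_const_nhds.sub hu)).inv₀ hx0)
  have hG : liminf G atTop = ⊤ := by
    refine top_unique ?_
    calc (⊤ : ℝ≥0∞) = ∫⁻ x, liminf (fun n => ENNReal.ofReal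
          (Complex.normSq ((x : ℂ) - u n))⁻¹) atTop ∂μ := htop ▸ lintegral_congr_ae hpt
      _ ≤ liminf G atTop := lintegral_liminf_le fun n => by fun_prop
  refine tendsto_atTop.mpr fun M => ?_
  filter_upwards [eventually_lt_of_lt_liminf (hG ▸ ENNReal.ofReal_lt_top : ENNReal.ofReal M < _)]
    with n hn
  rw [Ifun, integral_eq_lintegral_of_nonneg_ae
    (ae_of_all _ fun x => inv_nonneg.mpr (Complex.normSq_nonneg _)) (by fun_prop)]
  exact (ENNReal.ofReal_le_iff_le_toReal
    (integrable_inv_normSq_ofReal_sub (huUHP n)).lintegral_lt_top.ne).mp hn.le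

lemma norm_stT_le [IsFiniteMeasure μ] {u : ℂ} (hu : u ∈ UHP) {W r : ℝ} (hr : 0 < r)
    (huW : ‖u - W‖ < r) :
    ‖stT μ u‖ ≤ √(μ.real (Metric.ball W (2 * r)) * Ifun μ u) + μ.real univ / r := by
  set B := Metric.ball W (2 * r)
  set f : ℝ → ℝ := fun x => ‖((x : ℂ) - u)⁻¹‖
  have hfi : Integrable f μ := (integrable_inv_ofReal_sub_of_mem_UHP hu).norm
  have hnear : ∫ x in B, f x ∂μ ≤ √(μ.real B * Ifun μ u) := by
    have hf2 : MemLp f 2 μ := MemLp.of_bound hfi.aestronglyMeasurable (u.im)⁻¹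
      (ae_of_all _ fun x => by simpa [f] using norm_inv_le_inv hu (im_le_norm_ofReal_sub u x))
    convert setIntegral_le_sqrt_measureReal_mul_integral_sq (f := f) (fun _ => norm_nonneg _) hf2 B
      using 3
    simp [f, Ifun, Complex.normSq_eq_norm_sq]
  have hfar : ∫ x in Bᶜ, f x ∂μ ≤ μ.real univ / r := by
    calc ∫ x in Bᶜ, f x ∂μ ≤ ∫ _ in Bᶜ, r⁻¹ ∂μ := by
          refine setIntegral_mono_on hfi.integrableOn (integrableOn_const) measurableSet_ball.compl
            fun x hx => norm_inv_le_inv hr ?_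
          have hxW : 2 * r ≤ ‖(x : ℂ) - W‖ := by
            simpa [B, Real.dist_eq, ← Complex.ofReal_sub] using hx
          linarith [norm_sub_le_norm_sub_add_norm_sub (x : ℂ) u W]
      _ ≤ μ.real univ / r := by
          rw [setIntegral_const, smul_eq_mul, div_eq_mul_inv]
          exact mul_le_mul_of_nonneg_right (measureReal_mono (subset_univ _)) (by positivity)
  calc ‖stT μ u‖ ≤ ∫ x, f x ∂μ := norm_integral_le_integral_norm _
    _ = ∫ x in B, f x ∂μ + ∫ x in Bᶜ, f x ∂μ := (integral_add_compl measurableSet_ball hfi).symm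
    _ ≤ _ := add_le_add hnear hfar

lemma exists_normSq_stT_le [IsFiniteMeasure μ] {W : ℝ} (hW : μ {W} = 0) {ε : ℝ} (hε : 0 < ε) :
    ∃ r > 0, ∃ C, ∀ u ∈ UHP, ‖u - W‖ < r →
      Complex.normSq (stT μ u) ≤ ε * Ifun μ u + C := by
  have hlim : Tendsto (fun r => μ (Metric.cthickening r {W})) (𝓝 0) (𝓝 0) :=
    hW ▸ tendsto_measure_cthickening_of_isClosed ⟨1, one_pos, measure_ne_top _ _⟩
      isClosed_singleton
  obtain ⟨R, hR, hRμ⟩ := (hlim.eventually (gt_mem_nhds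
    (ENNReal.ofReal_pos.mpr (half_pos hε)))).exists_gt
  have hB : μ.real (Metric.ball W (2 * (R / 2))) ≤ ε / 2 := by
    rw [mul_div_cancel₀ R two_ne_zero, Metric.cthickening_singleton _ hR.le] at *
    refine ENNReal.toReal_le_of_le_ofReal (half_pos hε).le ?_
    exact (measure_mono Metric.ball_subset_closedBall).trans hRμ.le
  refine ⟨R / 2, half_pos hR, 2 * (μ.real univ / (R / 2)) ^ 2, fun u hu huW => ?_⟩
  have hm := norm_stT_le (μ := μ) hu (half_pos hR) huW
  have hI := Ifun_nonneg (μ := μ) u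
  set m := μ.real (Metric.ball W (2 * (R / 2)))
  set K := μ.real univ / (R / 2)
  have hsq := Real.sq_sqrt (mul_nonneg (measureReal_nonneg : 0 ≤ m) hI)
  rw [Complex.normSq_eq_norm_sq]
  nlinarith [sq_nonneg (√(m * Ifun μ u) - K), pow_le_pow_left₀ (norm_nonneg _) hm 2,
    mul_le_mul_of_nonneg_right hB hI]

end NonAtomEstimate

section Boundary

variable {μ : Measure ℝ} {t : ℝ} {ω : ℂ → ℂ}

lemma IsSubordT.mul_Ifun_lt [IsProbabilityMeasure μ] (hω : IsSubordT μ t ω) {z : ℂ}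
    (hz : z ∈ UHP) : (t - 1) * Ifun μ (ω z) < t * Complex.normSq (stT μ (ω z)) := by
  have hw := hω.maps z hz
  have him := congrArg Complex.im (hω.eqn z hz)
  simp only [Complex.sub_im, Complex.mul_im, Complex.ofReal_re, Complex.ofReal_im, zero_mul,
    add_zero, Complex.sub_re, Complex.one_re, Complex.one_im, sub_zero, nrT_im hw] at him
  have hN : 0 < Complex.normSq (stT μ (ω z)) := Complex.normSq_pos.mpr (stT_ne_zero hw)
  have hwim : 0 < (ω z).im := hw
  have hzim : 0 < z.im := hz
  rw [mul_div_assoc', eq_div_iff hN.ne'] at him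
  nlinarith [mul_pos hzim hN]

lemma IsSubordT.lintegral_inv_normSq_ne_top [IsProbabilityMeasure μ] (hω : IsSubordT μ t ω)
    (ht : 1 < t) {E W : ℝ} (hωE : ω E = W) (hW : μ {W} = 0) :
    ∫⁻ x, ENNReal.ofReal (Complex.normSq ((x : ℂ) - W))⁻¹ ∂μ ≠ ⊤ := by
  intro htop
  have hvert := nonTangentialSeq_verticalSeq E
  have hu : Tendsto (fun n => ω (verticalSeq E n)) atTop (𝓝 W) :=
    hωE ▸ (hω.tendsto_nhdsWithin (ofReal_mem_CUHP E)).comp hvert.tendsto_nhdsWithin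
  have hI := tendsto_Ifun_atTop hu (fun n => hω.maps _ (hvert.1 n)) hW htop
  obtain ⟨r, hr, C, hC⟩ := exists_normSq_stT_le hW (ε := (t - 1) / (2 * t)) (by
    apply div_pos <;> linarith)
  obtain ⟨n, hnr, hnI⟩ := ((tendsto_iff_norm_sub_tendsto_zero.mp hu).eventually
    (gt_mem_nhds hr) |>.and (hI.eventually_gt_atTop (2 * t * C / (t - 1)))).exists
  have hlt := hω.mul_Ifun_lt (hvert.1 n)
  have hle := hC _ (hω.maps _ (hvert.1 n)) hnr
  rw [div_lt_iff₀ (by linarith)] at hnI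
  have hε : t * ((t - 1) / (2 * t)) = (t - 1) / 2 := by field_simp
  have hle' := mul_le_mul_of_nonneg_left hle (by linarith : 0 ≤ t)
  rw [mul_add, ← mul_assoc, hε] at hle'
  linarith

lemma IsSubordT.stT_ne_zero_of_continuousAt [IsProbabilityMeasure μ] (hω : IsSubordT μ t ω)
    (ht : t ≠ 1) {z : ℂ} (hz : z ∈ CUHP) (hm : ContinuousAt (stT μ) (ω z)) :
    stT μ (ω z) ≠ 0 := by
  have := nhdsWithin_UHP_neBot hz
  have ht' : (t : ℂ) - 1 ≠ 0 := sub_ne_zero.mpr (by exact_mod_cast ht)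
  have hlim := hω.tendsto_nhdsWithin hz
  have hF : Tendsto (fun u => nrT μ (ω u)) (𝓝[UHP] z) (𝓝 ((t * ω z - z) / (t - 1))) := by
    refine (((hlim.const_mul _).sub (tendsto_id.mono_left nhdsWithin_le_nhds)).div_const _).congr'
      ?_
    filter_upwards [self_mem_nhdsWithin] with u hu
    simp only [id, hω.eqn u hu, mul_div_cancel_left₀ _ ht']
  have hprod : Tendsto (fun u => nrT μ (ω u) * stT μ (ω u)) (𝓝[UHP] z) (𝓝 (-1)) := by
    refine tendsto_const_nhds.congr' ?_
    filter_upwards [self_mem_nhdsWithin] with u hu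
    rw [nrT, neg_mul, inv_mul_cancel₀ (stT_ne_zero (hω.maps u hu))]
  intro h0
  have := tendsto_nhds_unique hprod (hF.mul (h0 ▸ hm.tendsto.comp hlim))
  norm_num at this

end Boundary

section LocalStructure

variable {μ : Measure ℝ}

lemma Assumption1.exists_measure_ball_diff_eq_zero {nac npp nppout : ℕ} {Em Ep : Fin nac → ℝ}
    {atom : Fin npp → ℝ} {ρ : ℝ → ℝ} (hμ : Assumption1 μ nac npp nppout Em Ep atom ρ) {W : ℝ}
    (hW : W ∉ msupp (acPart μ)) : ∃ ε > 0, μ (Metric.ball W ε \ {W}) = 0 := by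
  have := hμ.prob
  obtain ⟨ε₁, hε₁, hac⟩ : ∃ ε > 0, acPart μ (Metric.ball W ε) = 0 := by
    simp only [msupp, mem_ofPred_eq, not_forall, not_lt, nonpos_iff_eq_zero] at hW
    simpa [Real.ball_eq_Ioo] using hW
  have hT : IsClosed (range atom \ {W}) := ((finite_range atom).sdiff).isClosed
  obtain ⟨ε₂, hε₂, hatoms⟩ := Metric.isOpen_iff.mp hT.isOpen_compl W (by simp)
  refine ⟨min ε₁ ε₂, lt_min hε₁ hε₂, ?_⟩
  have hS : MeasurableSet (Metric.ball W (min ε₁ ε₂) \ {W}) :=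
    measurableSet_ball.diff (measurableSet_singleton W)
  have hsing : μ.singularPart volume (Metric.ball W (min ε₁ ε₂) \ {W}) = 0 := by
    rw [hμ.sing_atomic, Measure.finsetSum_apply]
    refine Finset.sum_eq_zero fun j _ => ?_
    rw [Measure.smul_apply, Measure.dirac_apply' _ hS, indicator_of_notMem, smul_zero]
    rintro ⟨hjball, hjW⟩
    exact hatoms (Metric.ball_subset_ball (min_le_right _ _) hjball) ⟨mem_range_self j, hjW⟩
  have hacS : acPart μ (Metric.ball W (min ε₁ ε₂) \ {W}) = 0 :=
    measure_mono_null (sdiff_subset.trans (Metric.ball_subset_ball (min_le_left _ _))) hac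
  rw [μ.haveLebesgueDecomposition_add volume, Measure.add_apply, hsing, zero_add]
  exact hacS

lemma stT_eq_add_stT_restrict_compl [IsFiniteMeasure μ] (W : ℝ) {u : ℂ} (hu : u ∈ UHP) :
    stT μ u = μ.real {W} * ((W : ℂ) - u)⁻¹ + stT (μ.restrict {W}ᶜ) u := by
  conv_lhs => rw [stT, ← Measure.restrict_add_restrict_compl (μ := μ) (measurableSet_singleton W)]
  rw [integral_add_measure (integrable_inv_ofReal_sub_of_mem_UHP hu).restrict
    (integrable_inv_ofReal_sub_of_mem_UHP hu).restrict, Measure.restrict_singleton,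
    integral_smul_measure, integral_dirac, stT, Measure.real, Complex.real_smul]

lemma exists_analyticAt_eqOn_nrT_of_atom [IsFiniteMeasure μ] {W ε : ℝ} (hε : 0 < ε)
    (hW : μ {W} ≠ 0) (hnull : μ (Metric.ball W ε \ {W}) = 0) :
    ∃ g : ℂ → ℂ, AnalyticAt ℂ g W ∧ EqOn g (nrT μ) UHP := by
  set ν := μ.restrict {W}ᶜ
  have hν : ν (Metric.ball W ε) = 0 := by
    rwa [Measure.restrict_apply measurableSet_ball, ← sdiff_eq]
  have hc : (μ.real {W} : ℂ) ≠ 0 := by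
    exact_mod_cast (ENNReal.toReal_pos hW (measure_ne_top μ _)).ne'
  set D : ℂ → ℂ := fun u => μ.real {W} + (W - u) * stT ν u
  have hD : AnalyticAt ℂ D W :=
    analyticAt_const.add ((analyticAt_const.sub analyticAt_id).mul
      (stT_analyticAt_of_measure_ball_eq_zero hε hν))
  refine ⟨fun u => (u - W) / D u, (analyticAt_id.sub analyticAt_const).div hD (by simpa [D] using hc),
    fun u hu => ?_⟩
  have hWu : (W : ℂ) - u ≠ 0 := ofReal_sub_ne_zero hu W
  have hm : stT μ u = D u / (W - u) := by
    rw [stT_eq_add_stT_restrict_compl W hu]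
    simp only [D, ν]
    field_simp
  simp only [nrT, hm, inv_div, ← neg_div, neg_sub]

lemma Assumption1.exists_analyticAt_eqOn_nrT {nac npp nppout : ℕ} {Em Ep : Fin nac → ℝ}
    {atom : Fin npp → ℝ} {ρ : ℝ → ℝ} (hμ : Assumption1 μ nac npp nppout Em Ep atom ρ)
    {t : ℝ} (ht : 1 < t) {ω : ℂ → ℂ} (hω : IsSubordT μ t ω) {E W : ℝ} (hωE : ω E = W)
    (hW : ¬(μ {W} ≠ 0 ∧ W ∈ msupp (acPart μ))) :
    ∃ g : ℂ → ℂ, AnalyticAt ℂ g W ∧ EqOn g (nrT μ) UHP := by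
  have := hμ.prob
  by_cases hatom : μ {W} = 0
  · have hWac : W ∉ msupp (acPart μ) := fun hWac =>
      hω.lintegral_inv_normSq_ne_top ht hωE hatom (hμ.lintegral_inv_normSq_sub_eq_top hWac)
    obtain ⟨ε, hε, hnull⟩ := hμ.exists_measure_ball_diff_eq_zero hWac
    rw [measure_sdiff_null hatom] at hnull
    have hm := stT_analyticAt_of_measure_ball_eq_zero hε hnull
    have hm0 := hω.stT_ne_zero_of_continuousAt ht.ne' (ofReal_mem_CUHP E) (hωE ▸ hm.continuousAt)
    exact ⟨nrT μ, (hm.inv (hωE ▸ hm0)).neg, fun _ _ => rfl⟩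
  · obtain ⟨ε, hε, hnull⟩ := hμ.exists_measure_ball_diff_eq_zero fun h => hW ⟨hatom, h⟩
    exact exists_analyticAt_eqOn_nrT_of_atom hε hatom hnull

end LocalStructure

/-- Analytic extension of `F_μ`, Julia–Carathéodory derivative at
atoms, and characterization of divergence of the derivative of `ω_t`. -/
theorem julia_caratheodory_properties
    (μ : Measure ℝ) (nac npp nppout : ℕ)
    (Em Ep : Fin nac → ℝ) (atom : Fin npp → ℝ) (ρ : ℝ → ℝ)
    (hμ : Assumption1 μ nac npp nppout Em Ep atom ρ)
    (t : ℝ) (ht : 1 < t) (ω : ℂ → ℂ) (hω : IsSubordT μ t ω) :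
    -- (i) F_μ extends analytically to a neighborhood of every point of ω_t(ℂ⁺ ∪ ℝ)
    -- which is not an atom of μ lying in supp(μ_ac)
    (∀ w ∈ ω '' CUHP, ¬(w.im = 0 ∧ μ {w.re} ≠ 0 ∧ w.re ∈ msupp (acPart μ)) →
      ∃ r : ℝ, 0 < r ∧ ∃ g : ℂ → ℂ,
        (∀ u ∈ Metric.ball w r, AnalyticAt ℂ g u) ∧
        Set.EqOn g (nrT μ) (Metric.ball w r ∩ UHP)) ∧
    -- (ii) the Julia–Carathéodory derivative of F_μ at an atom E equals 1/μ({E})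
    (∀ E : ℝ, μ {E} ≠ 0 → ∀ zs : ℕ → ℂ, NonTangentialSeq zs E →
      Tendsto (fun n => nrT μ (zs n) / (zs n - (E : ℂ))) atTop
        (𝓝 ((((μ {E}).toReal)⁻¹ : ℝ) : ℂ))) ∧
    -- (iii) divergence of the Julia–Carathéodory derivative of ω_t at E ∈ ℝ
    (∀ E : ℝ, ∀ g : ℂ → ℂ, AnalyticAt ℂ g (ω (E : ℂ)) →
      (∀ z ∈ UHP, g z = nrT μ z) →
      ((∀ zs : ℕ → ℂ, NonTangentialSeq zs E →
          Tendsto (fun n => ‖(ω (zs n) - ω (E : ℂ)) / (zs n - (E : ℂ))‖)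
            atTop atTop)
        ↔ deriv g (ω (E : ℂ)) = ((t / (t - 1) : ℝ) : ℂ))) := by
  have := hμ.prob
  refine ⟨?_, fun E hE zs hzs => hzs.tendsto_nrT_div_sub hE,
    fun E g hg hgF => hω.tendsto_norm_div_atTop_iff ht.ne' E hg.differentiableAt
      fun z hz => hgF z hz⟩
  rintro w ⟨z, hz, rfl⟩ hne
  by_cases hw : ω z ∈ UHP
  · exact exists_analyticAt_eqOn_of_analyticAt (nrT_analyticAt_of_mem_UHP hw) fun _ _ => rfl
  have hwim : (ω z).im = 0 := le_antisymm (not_lt.mp hw) (hω.im_nonneg hz)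
  have hzim : z.im = 0 := le_antisymm (not_lt.mp fun h => hw (hω.maps z h)) hz
  have hzE : z = (z.re : ℂ) := Complex.ext rfl (by simp [hzim])
  have hωW : ω z = ((ω z).re : ℂ) := Complex.ext rfl (by simp [hwim])
  obtain ⟨g, hg, hgF⟩ := hμ.exists_analyticAt_eqOn_nrT ht hω (E := z.re) (hzE ▸ hωW)
    fun h => hne ⟨hwim, h⟩
  exact exists_analyticAt_eqOn_of_analyticAt (hωW ▸ hg) hgF
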